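/- Let H be a lower semibounded self-adjoint operator on a Hilbert space and let x be a bounded self-adjoint operator such that [1_{(-∞,0]}(H), x] is trace class with ‖[1_{(-∞,0]}(H), x]‖₁ ≤ M. Then for every t ∈ ℝ, the commutator [1_{(-∞,0]}(H), e^{itx}] is trace class and ‖[1_{(-∞,0]}(H), e^{itx}]‖₁ ≤ |t| M. -/

import Mathlib

open scoped InnerProductSpace
open scoped ENNReal

/-- The absolute value `|A| = (A* A)^{1/2}` of a bounded operator. -/
noncomputable def absOp {E : Type*} [NormedAddCommGroup E] [InnerProductSpace ℂ E]
    [CompleteSpace E] (A : E →L[ℂ] E) : E →L[ℂ] E :=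
  CFC.sqrt (ContinuousLinearMap.adjoint A * A)

/-- The trace norm `‖A‖₁ = Tr |A|`, computed in a Hilbert basis `b`. -/
noncomputable def traceNorm {ι E : Type*} [NormedAddCommGroup E] [InnerProductSpace ℂ E]
    [CompleteSpace E] (b : HilbertBasis ι ℂ E) (A : E →L[ℂ] E) : ℝ :=
  ∑' i, RCLike.re (⟪absOp A (b i), b i⟫_ℂ)

/-- `A` is trace class. -/
def IsTraceClass {ι E : Type*} [NormedAddCommGroup E] [InnerProductSpace ℂ E]
    [CompleteSpace E] (b : HilbertBasis ι ℂ E) (A : E →L[ℂ] E) : Prop :=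
  Summable (fun i => RCLike.re (⟪absOp A (b i), b i⟫_ℂ))

namespace CommTrace

open ContinuousLinearMap
open scoped ENNReal

set_option maxHeartbeats 1000000
set_option synthInstance.maxHeartbeats 400000

set_option linter.unusedSectionVars false

variable {ι E : Type*} [NormedAddCommGroup E] [InnerProductSpace ℂ E] [CompleteSpace E]

/-- Hilbert–Schmidt-type sum. -/
noncomputable def esq (b : HilbertBasis ι ℂ E) (S : E →L[ℂ] E) : ℝ≥0∞ :=
  ∑' i, ENNReal.ofReal (‖S (b i)‖ ^ 2)

/-- sup-characterization quantity for the trace norm. -/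
noncomputable def eT (b : HilbertBasis ι ℂ E) (A : E →L[ℂ] E) : ℝ≥0∞ :=
  ⨆ (F : Finset ι) (V : {V : E →L[ℂ] E // ‖V‖ ≤ 1}) (W : {W : E →L[ℂ] E // ‖W‖ ≤ 1}),
    ENNReal.ofReal ‖∑ i ∈ F, ⟪A (V.1 (b i)), W.1 (b i)⟫_ℂ‖

/-- ENNReal trace norm. -/
noncomputable def eTr (b : HilbertBasis ι ℂ E) (A : E →L[ℂ] E) : ℝ≥0∞ :=
  esq b (CFC.sqrt (absOp A))

lemma hasSum_normsq (b : HilbertBasis ι ℂ E) (y : E) :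
    HasSum (fun i => ‖⟪y, b i⟫_ℂ‖ ^ 2) (‖y‖ ^ 2) := by
  have h := b.hasSum_inner_mul_inner y y
  have h2 : (fun i => ⟪y, b i⟫_ℂ * ⟪b i, y⟫_ℂ)
      = fun i => ((‖⟪y, b i⟫_ℂ‖ ^ 2 : ℝ) : ℂ) := by
    funext i
    rw [show ⟪b i, y⟫_ℂ = (starRingEnd ℂ) ⟪y, b i⟫_ℂ from (inner_conj_symm _ _).symm,
      Complex.mul_conj, Complex.normSq_eq_norm_sq]
  rw [h2] at h
  have h3 := (Complex.reCLM : ℂ →L[ℝ] ℝ).hasSum h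
  simp only [Complex.reCLM_apply, Complex.ofReal_re] at h3
  rwa [show (⟪y, y⟫_ℂ).re = ‖y‖ ^ 2 by
    have := inner_self_eq_norm_sq (𝕜 := ℂ) y
    simpa [RCLike.re_to_complex] using this] at h3

lemma parseval_enn (b : HilbertBasis ι ℂ E) (y : E) :
    ∑' i, ENNReal.ofReal (‖⟪y, b i⟫_ℂ‖ ^ 2) = ENNReal.ofReal (‖y‖ ^ 2) := by
  rw [← (hasSum_normsq b y).tsum_eq]
  exact (ENNReal.ofReal_tsum_of_nonneg (fun i => sq_nonneg _)
    (hasSum_normsq b y).summable).symm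

lemma esq_eq_double (b : HilbertBasis ι ℂ E) (T : E →L[ℂ] E) :
    esq b T = ∑' i, ∑' j, ENNReal.ofReal (‖⟪T (b i), b j⟫_ℂ‖ ^ 2) := by
  unfold esq
  congr 1
  funext i
  rw [parseval_enn b (T (b i))]

lemma esq_adjoint (b : HilbertBasis ι ℂ E) (S : E →L[ℂ] E) :
    esq b (ContinuousLinearMap.adjoint S) = esq b S := by
  rw [esq_eq_double, esq_eq_double, ENNReal.tsum_comm]
  congr 1
  funext i
  congr 1
  funext j
  rw [adjoint_inner_left, norm_inner_symm]

lemma esq_mul_left_le (b : HilbertBasis ι ℂ E) (X S : E →L[ℂ] E) :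
    esq b (X * S) ≤ ENNReal.ofReal (‖X‖ ^ 2) * esq b S := by
  rw [esq, esq, ← ENNReal.tsum_mul_left]
  refine ENNReal.tsum_le_tsum fun i => ?_
  rw [← ENNReal.ofReal_mul (by positivity)]
  apply ENNReal.ofReal_le_ofReal
  have h := X.le_opNorm (S (b i))
  have : ‖(X * S) (b i)‖ = ‖X (S (b i))‖ := by rw [ContinuousLinearMap.mul_apply]
  rw [this]
  nlinarith [norm_nonneg (X (S (b i))), norm_nonneg (S (b i)), norm_nonneg X]

lemma esq_mul_right_le (b : HilbertBasis ι ℂ E) (S X : E →L[ℂ] E) :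
    esq b (S * X) ≤ esq b S * ENNReal.ofReal (‖X‖ ^ 2) := by
  have h1 : ContinuousLinearMap.adjoint (S * X)
      = ContinuousLinearMap.adjoint X * ContinuousLinearMap.adjoint S := by
    rw [← star_eq_adjoint, ← star_eq_adjoint, ← star_eq_adjoint, star_mul]
  calc esq b (S * X) = esq b (ContinuousLinearMap.adjoint (S * X)) :=
        (esq_adjoint b (S * X)).symm
    _ = esq b (ContinuousLinearMap.adjoint X * ContinuousLinearMap.adjoint S) := by rw [h1]
    _ ≤ ENNReal.ofReal (‖ContinuousLinearMap.adjoint X‖ ^ 2)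
        * esq b (ContinuousLinearMap.adjoint S) := esq_mul_left_le _ _ _
    _ = esq b S * ENNReal.ofReal (‖X‖ ^ 2) := by
        rw [esq_adjoint, ← star_eq_adjoint, norm_star, mul_comm]

section absOpFacts

variable (A : E →L[ℂ] E)

lemma absOp_nonneg : (0 : E →L[ℂ] E) ≤ absOp A :=
  CFC.sqrt_nonneg _

lemma absOp_sa : IsSelfAdjoint (absOp A) :=
  IsSelfAdjoint.of_nonneg (absOp_nonneg A)

lemma absOp_mul_self : absOp A * absOp A = ContinuousLinearMap.adjoint A * A := by
  refine CFC.sqrt_mul_sqrt_self _ ?_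
  rw [← star_eq_adjoint]
  exact star_mul_self_nonneg A

/-- abbreviation for the square root of `|A|`. -/
noncomputable abbrev sqA : E →L[ℂ] E := CFC.sqrt (absOp A)

lemma sqA_nonneg : (0 : E →L[ℂ] E) ≤ sqA A := CFC.sqrt_nonneg _

lemma sqA_sa : IsSelfAdjoint (sqA A) := IsSelfAdjoint.of_nonneg (sqA_nonneg A)

lemma sqA_mul_self : sqA A * sqA A = absOp A :=
  CFC.sqrt_mul_sqrt_self _ (absOp_nonneg A)

lemma inner_absOp (v w : E) : ⟪absOp A v, w⟫_ℂ = ⟪sqA A v, sqA A w⟫_ℂ := by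
  have h := adjoint_inner_left (sqA A) w (sqA A v)
  rw [(sqA_sa A).adjoint_eq] at h
  rw [← sqA_mul_self A, ContinuousLinearMap.mul_apply]
  exact h

lemma norm_apply_eq (v : E) : ‖A v‖ = ‖absOp A v‖ := by
  have h1 : ⟪A v, A v⟫_ℂ = ⟪absOp A v, absOp A v⟫_ℂ := by
    have ha := adjoint_inner_right A v (A v)
    have hb := adjoint_inner_right (absOp A) v (absOp A v)
    rw [(absOp_sa A).adjoint_eq] at hb
    rw [← ha, ← hb]
    congr 1
    rw [← ContinuousLinearMap.mul_apply, ← ContinuousLinearMap.mul_apply, absOp_mul_self]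
  have h3 : ‖A v‖ ^ 2 = ‖absOp A v‖ ^ 2 := by
    rw [← inner_self_eq_norm_sq (𝕜 := ℂ), ← inner_self_eq_norm_sq (𝕜 := ℂ), h1]
  calc ‖A v‖ = Real.sqrt (‖A v‖ ^ 2) := (Real.sqrt_sq (norm_nonneg _)).symm
    _ = Real.sqrt (‖absOp A v‖ ^ 2) := by rw [h3]
    _ = ‖absOp A v‖ := Real.sqrt_sq (norm_nonneg _)

end absOpFacts

section polar

variable (A : E →L[ℂ] E)

lemma approx_polar {ε : ℝ} (hε : 0 < ε) :
    ∃ Z : E →L[ℂ] E, ‖Z‖ ≤ 1 ∧ ‖A - Z * absOp A‖ ≤ ε ∧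
      ‖absOp A - ContinuousLinearMap.adjoint Z * A‖ ≤ ε := by
  set B := absOp A with hB
  have hB0 : (0 : E →L[ℂ] E) ≤ B := absOp_nonneg A
  have hBsa : IsSelfAdjoint B := absOp_sa A
  have hspec : ∀ s ∈ spectrum ℝ B, 0 ≤ s := fun s hs => spectrum_nonneg_of_nonneg hB0 hs
  set f : ℝ → ℝ := fun s => (s + ε)⁻¹ with hf
  have hfc : ContinuousOn f (spectrum ℝ B) := by
    apply ContinuousOn.inv₀
    · fun_prop
    · intro s hs
      have := hspec s hs
      positivity
  have hid2 : ContinuousOn (fun s : ℝ => s) (spectrum ℝ B) := by fun_prop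
  have hfc2 : ContinuousOn (fun s : ℝ => f s * s) (spectrum ℝ B) := hfc.mul hid2
  set D := cfc f B with hD
  have hDsa : IsSelfAdjoint D := cfc_predicate f B
  have hid : cfc (fun s : ℝ => s) B = B := cfc_id' ℝ B
  have hDB : D * B = cfc (fun s : ℝ => f s * s) B := by
    rw [cfc_mul _ _ B hfc hid2, hid, hD]
  have hBD : B * D = cfc (fun s : ℝ => f s * s) B := by
    rw [show (fun s : ℝ => f s * s) = fun s : ℝ => s * f s from funext fun s => mul_comm _ _,
      cfc_mul _ _ B hid2 hfc, hid, hD]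
  have hfs1 : ∀ s ∈ spectrum ℝ B, ‖f s * s‖ ≤ 1 := by
    intro s hs
    have h0 := hspec s hs
    have hpos : 0 < s + ε := by positivity
    rw [hf]
    simp only [Real.norm_eq_abs]
    rw [abs_of_nonneg (by positivity), inv_mul_le_iff₀ hpos]
    linarith
  have hDBnorm : ‖D * B‖ ≤ 1 := by
    rw [hDB]
    exact norm_cfc_le zero_le_one hfs1
  have hBDnorm : ‖B * D‖ ≤ 1 := by
    rw [hBD]
    exact norm_cfc_le zero_le_one hfs1
  have hkey : ∀ s ∈ spectrum ℝ B, ‖s * (f s * s) - s‖ ≤ ε := by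
    intro s hs
    have h0 := hspec s hs
    have hpos : 0 < s + ε := by positivity
    rw [hf]
    simp only [Real.norm_eq_abs]
    have hval : s * ((s + ε)⁻¹ * s) - s = -(ε * (s * (s + ε)⁻¹)) := by
      field_simp
      ring
    rw [hval, abs_neg, abs_of_nonneg (by positivity)]
    have h1 : s * (s + ε)⁻¹ ≤ 1 := by rw [mul_inv_le_iff₀ hpos]; linarith
    nlinarith
  have hBDB : ‖B * (D * B) - B‖ ≤ ε := by
    have e1 : B * (D * B) - B = cfc (fun s : ℝ => s * (f s * s) - s) B := by
      rw [cfc_sub (fun s : ℝ => s * (f s * s)) (fun s : ℝ => s) B (hid2.mul hfc2) hid2, cfc_mul _ _ B hid2 hfc2, hid, hDB]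
    rw [e1]
    exact norm_cfc_le hε.le hkey
  have hDBB : ‖D * (B * B) - B‖ ≤ ε := by
    have e2 : D * (B * B) = B * (D * B) := by
      have hBB : cfc (fun s : ℝ => s * s) B = B * B := by
        rw [cfc_mul _ _ B hid2 hid2, hid]
      have r1 : D * (B * B) = cfc (fun s : ℝ => f s * (s * s)) B := by
        rw [← hBB, hD, ← cfc_mul f (fun s : ℝ => s * s) B hfc (hid2.mul hid2)]
      have r2 : cfc (fun s : ℝ => s * (f s * s)) B = B * (D * B) := by
        rw [cfc_mul _ _ B hid2 hfc2, hid, hDB]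
      rw [r1, ← r2]
      congr 1
      funext s
      ring
    rw [e2]
    exact hBDB
  refine ⟨A * D, ?_, ?_, ?_⟩
  · refine opNorm_le_bound _ zero_le_one fun v => ?_
    have h1 : (A * D) v = A (D v) := rfl
    rw [h1, norm_apply_eq A (D v), one_mul]
    calc ‖B (D v)‖ = ‖(B * D) v‖ := rfl
      _ ≤ ‖B * D‖ * ‖v‖ := le_opNorm _ _
      _ ≤ 1 * ‖v‖ := mul_le_mul_of_nonneg_right hBDnorm (norm_nonneg v)
      _ = ‖v‖ := one_mul _
  · refine opNorm_le_bound _ hε.le fun v => ?_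
    have h1 : (A - A * D * B) v = A (v - (D * B) v) := by
      simp [ContinuousLinearMap.sub_apply, mul_apply, map_sub]
    rw [h1, norm_apply_eq A _]
    have h2 : B (v - (D * B) v) = (B - B * (D * B)) v := by
      simp [ContinuousLinearMap.sub_apply, mul_apply, map_sub]
    rw [h2]
    calc ‖(B - B * (D * B)) v‖ ≤ ‖B - B * (D * B)‖ * ‖v‖ := le_opNorm _ _
      _ ≤ ε * ‖v‖ := by
          apply mul_le_mul_of_nonneg_right _ (norm_nonneg v)
          rw [← norm_neg]
          simpa [neg_sub] using hBDB
  · have hadj : ContinuousLinearMap.adjoint (A * D)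
        = D * ContinuousLinearMap.adjoint A := by
      rw [← star_eq_adjoint, ← star_eq_adjoint, star_mul, hDsa.star_eq]
    rw [hadj]
    have h3 : D * ContinuousLinearMap.adjoint A * A = D * (B * B) := by
      rw [mul_assoc, ← absOp_mul_self A]
    rw [h3, ← norm_neg]
    simpa [neg_sub] using hDBB

end polar

section eTlemmas

variable (b : HilbertBasis ι ℂ E)

lemma le_eT (A : E →L[ℂ] E) (F : Finset ι) (V W : {V : E →L[ℂ] E // ‖V‖ ≤ 1}) :
    ENNReal.ofReal ‖∑ i ∈ F, ⟪A (V.1 (b i)), W.1 (b i)⟫_ℂ‖ ≤ eT b A :=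
  le_iSup_of_le F (le_iSup_of_le V (le_iSup_of_le W le_rfl))

lemma eT_le {A : E →L[ℂ] E} {m : ℝ≥0∞}
    (h : ∀ (F : Finset ι) (V W : {V : E →L[ℂ] E // ‖V‖ ≤ 1}),
      ENNReal.ofReal ‖∑ i ∈ F, ⟪A (V.1 (b i)), W.1 (b i)⟫_ℂ‖ ≤ m) : eT b A ≤ m :=
  iSup_le fun F => iSup_le fun V => iSup_le fun W => h F V W

lemma norm_contr_basis (V : {V : E →L[ℂ] E // ‖V‖ ≤ 1}) (i : ι) : ‖V.1 (b i)‖ ≤ 1 :=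
  le_trans (V.1.le_opNorm _) (by rw [b.orthonormal.1 i, mul_one]; exact V.2)

lemma norm_one_le' : ‖(1 : E →L[ℂ] E)‖ ≤ 1 := by
  rw [ContinuousLinearMap.one_def]
  exact ContinuousLinearMap.norm_id_le

theorem eT_le_eTr (A : E →L[ℂ] E) : eT b A ≤ eTr b A := by
  by_cases htop : eTr b A = ⊤
  · rw [htop]; exact le_top
  set τ := (eTr b A).toReal with hτ
  have hτ0 : 0 ≤ τ := ENNReal.toReal_nonneg
  have hsum_bound : ∀ (V : E →L[ℂ] E), ‖V‖ ≤ 1 → ∀ F : Finset ι,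
      ∑ i ∈ F, ‖(sqA A * V) (b i)‖ ^ 2 ≤ τ := by
    intro V hV F
    rw [← ENNReal.ofReal_le_iff_le_toReal htop,
      ENNReal.ofReal_sum_of_nonneg (fun i _ => sq_nonneg _)]
    calc ∑ i ∈ F, ENNReal.ofReal (‖(sqA A * V) (b i)‖ ^ 2)
        ≤ esq b (sqA A * V) := ENNReal.sum_le_tsum F
      _ ≤ esq b (sqA A) * ENNReal.ofReal (‖V‖ ^ 2) := esq_mul_right_le b _ V
      _ ≤ eTr b A * 1 := by
          refine mul_le_mul' le_rfl (ENNReal.ofReal_le_one.2 ?_)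
          nlinarith [norm_nonneg V]
      _ = eTr b A := mul_one _
  refine eT_le b fun F V W => ?_
  rw [ENNReal.ofReal_le_iff_le_toReal htop]
  refine le_of_forall_pos_le_add fun δ hδ => ?_
  have hε : 0 < δ / (F.card + 1) := by positivity
  obtain ⟨Z, hZ1, hZ2, hZ3⟩ := approx_polar A hε
  have hsplit : ∀ i, ⟪A (V.1 (b i)), W.1 (b i)⟫_ℂ
      = ⟪(A - Z * absOp A) (V.1 (b i)), W.1 (b i)⟫_ℂ
        + ⟪(Z * absOp A) (V.1 (b i)), W.1 (b i)⟫_ℂ := by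
    intro i
    rw [← inner_add_left]
    congr 1
    simp [ContinuousLinearMap.sub_apply]
  have hterm1 : ∀ i ∈ F, ‖⟪(A - Z * absOp A) (V.1 (b i)), W.1 (b i)⟫_ℂ‖ ≤ δ / (F.card + 1) := by
    intro i _
    have hA1 : ‖(A - Z * absOp A) (V.1 (b i))‖ ≤ δ / (F.card + 1) := by
      calc ‖(A - Z * absOp A) (V.1 (b i))‖
          ≤ ‖A - Z * absOp A‖ * ‖V.1 (b i)‖ := ContinuousLinearMap.le_opNorm _ _
        _ ≤ (δ / (F.card + 1)) * 1 :=
            mul_le_mul hZ2 (norm_contr_basis b V i) (norm_nonneg _) hε.le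
        _ = δ / (F.card + 1) := mul_one _
    refine le_trans (norm_inner_le_norm _ _) ?_
    have hw := norm_contr_basis b W i
    nlinarith [norm_nonneg ((A - Z * absOp A) (V.1 (b i))), norm_nonneg (W.1 (b i))]
  have hW' : ‖ContinuousLinearMap.adjoint Z * W.1‖ ≤ 1 := by
    refine le_trans (norm_mul_le _ _) ?_
    have hZadj : ‖ContinuousLinearMap.adjoint Z‖ ≤ 1 := by
      rw [← ContinuousLinearMap.star_eq_adjoint, norm_star]
      exact hZ1
    nlinarith [norm_nonneg (ContinuousLinearMap.adjoint Z), norm_nonneg W.1, W.2]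
  have ht2 : ∀ i, ⟪(Z * absOp A) (V.1 (b i)), W.1 (b i)⟫_ℂ
      = ⟪(sqA A * V.1) (b i), (sqA A * (ContinuousLinearMap.adjoint Z * W.1)) (b i)⟫_ℂ := by
    intro i
    have h1 : (Z * absOp A) (V.1 (b i)) = Z (absOp A (V.1 (b i))) := rfl
    rw [h1, ← adjoint_inner_right, inner_absOp A]
    rfl
  have hcs : ‖∑ i ∈ F, ⟪(Z * absOp A) (V.1 (b i)), W.1 (b i)⟫_ℂ‖ ≤ τ := by
    have hsum2 : ∀ i ∈ F, ‖⟪(Z * absOp A) (V.1 (b i)), W.1 (b i)⟫_ℂ‖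
        ≤ ‖(sqA A * V.1) (b i)‖ * ‖(sqA A * (ContinuousLinearMap.adjoint Z * W.1)) (b i)‖ := by
      intro i _
      rw [ht2 i]
      exact norm_inner_le_norm _ _
    calc ‖∑ i ∈ F, ⟪(Z * absOp A) (V.1 (b i)), W.1 (b i)⟫_ℂ‖
        ≤ ∑ i ∈ F, ‖⟪(Z * absOp A) (V.1 (b i)), W.1 (b i)⟫_ℂ‖ := norm_sum_le _ _
      _ ≤ ∑ i ∈ F, ‖(sqA A * V.1) (b i)‖
            * ‖(sqA A * (ContinuousLinearMap.adjoint Z * W.1)) (b i)‖ :=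
          Finset.sum_le_sum hsum2
      _ ≤ τ := by
          have h1 := hsum_bound V.1 V.2 F
          have h2 := hsum_bound (ContinuousLinearMap.adjoint Z * W.1) hW' F
          have hcs2 := Finset.sum_mul_sq_le_sq_mul_sq F
            (fun i => ‖(sqA A * V.1) (b i)‖)
            (fun i => ‖(sqA A * (ContinuousLinearMap.adjoint Z * W.1)) (b i)‖)
          have hnn : 0 ≤ ∑ i ∈ F, ‖(sqA A * V.1) (b i)‖
              * ‖(sqA A * (ContinuousLinearMap.adjoint Z * W.1)) (b i)‖ :=
            Finset.sum_nonneg fun i _ => mul_nonneg (norm_nonneg _) (norm_nonneg _)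
          have hnn1 : (0:ℝ) ≤ ∑ i ∈ F, ‖(sqA A * V.1) (b i)‖ ^ 2 :=
            Finset.sum_nonneg fun i _ => sq_nonneg _
          nlinarith
  calc ‖∑ i ∈ F, ⟪A (V.1 (b i)), W.1 (b i)⟫_ℂ‖
      = ‖(∑ i ∈ F, ⟪(A - Z * absOp A) (V.1 (b i)), W.1 (b i)⟫_ℂ)
          + ∑ i ∈ F, ⟪(Z * absOp A) (V.1 (b i)), W.1 (b i)⟫_ℂ‖ := by
        rw [← Finset.sum_add_distrib]
        congr 1
        exact Finset.sum_congr rfl fun i _ => hsplit i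
    _ ≤ ‖∑ i ∈ F, ⟪(A - Z * absOp A) (V.1 (b i)), W.1 (b i)⟫_ℂ‖
          + ‖∑ i ∈ F, ⟪(Z * absOp A) (V.1 (b i)), W.1 (b i)⟫_ℂ‖ := norm_add_le _ _
    _ ≤ F.card * (δ / (F.card + 1)) + τ := by
        refine add_le_add ?_ hcs
        refine le_trans (norm_sum_le _ _) ?_
        have := Finset.sum_le_card_nsmul F _ _ hterm1
        rwa [nsmul_eq_mul] at this
    _ ≤ τ + δ := by
        have hc0 : (0:ℝ) ≤ (F.card : ℝ) := Nat.cast_nonneg _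
        have h1 : (F.card : ℝ) * (δ / (F.card + 1)) ≤ δ := by
          rw [mul_div_assoc']
          rw [div_le_iff₀ (by positivity)]
          nlinarith
        linarith

theorem eTr_le_eT (A : E →L[ℂ] E) : eTr b A ≤ eT b A := by
  by_cases htop : eT b A = ⊤
  · rw [htop]; exact le_top
  rw [eTr, esq, ENNReal.tsum_eq_iSup_sum]
  refine iSup_le fun F => ?_
  rw [← ENNReal.ofReal_sum_of_nonneg (fun i _ => sq_nonneg _)]
  refine ENNReal.le_of_forall_pos_le_add fun ε hε _ => ?_
  have hεr : 0 < (ε : ℝ) / (F.card + 1) := by positivity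
  obtain ⟨Z, hZ1, hZ2, hZ3⟩ := approx_polar A hεr
  have hterm : ∀ i, ‖(sqA A) (b i)‖ ^ 2
      = RCLike.re ⟪(absOp A - ContinuousLinearMap.adjoint Z * A) (b i), (b i)⟫_ℂ
        + RCLike.re ⟪A (b i), Z (b i)⟫_ℂ := by
    intro i
    have h1 : RCLike.re ⟪absOp A (b i), b i⟫_ℂ = ‖(sqA A) (b i)‖ ^ 2 := by
      rw [inner_absOp A, inner_self_eq_norm_sq (𝕜 := ℂ)]
    have h3 : ⟪(ContinuousLinearMap.adjoint Z * A) (b i), b i⟫_ℂ = ⟪A (b i), Z (b i)⟫_ℂ := by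
      have h4 : (ContinuousLinearMap.adjoint Z * A) (b i)
          = ContinuousLinearMap.adjoint Z (A (b i)) := rfl
      rw [h4, adjoint_inner_left]
    have h2 : ⟪absOp A (b i), b i⟫_ℂ
        = ⟪(absOp A - ContinuousLinearMap.adjoint Z * A) (b i), b i⟫_ℂ
          + ⟪(ContinuousLinearMap.adjoint Z * A) (b i), b i⟫_ℂ := by
      rw [← inner_add_left]
      congr 1
      simp [ContinuousLinearMap.sub_apply]
    rw [← h1, h2, h3, map_add]
  have herr : ∀ i ∈ F,
      RCLike.re ⟪(absOp A - ContinuousLinearMap.adjoint Z * A) (b i), (b i)⟫_ℂ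
        ≤ (ε : ℝ) / (F.card + 1) := by
    intro i _
    refine le_trans (RCLike.re_le_norm _) (le_trans (norm_inner_le_norm _ _) ?_)
    have hb1 : ‖b i‖ = 1 := b.orthonormal.1 i
    have he : ‖(absOp A - ContinuousLinearMap.adjoint Z * A) (b i)‖ ≤ (ε : ℝ) / (F.card + 1) := by
      calc ‖(absOp A - ContinuousLinearMap.adjoint Z * A) (b i)‖
          ≤ ‖absOp A - ContinuousLinearMap.adjoint Z * A‖ * ‖b i‖ :=
            ContinuousLinearMap.le_opNorm _ _
        _ ≤ ((ε : ℝ) / (F.card + 1)) * 1 := by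
            rw [hb1]
            exact mul_le_mul_of_nonneg_right hZ3 zero_le_one
        _ = (ε : ℝ) / (F.card + 1) := mul_one _
    rw [hb1, mul_one]
    exact he
  have hsum : ∑ i ∈ F, ‖(sqA A) (b i)‖ ^ 2
      ≤ (F.card : ℝ) * ((ε : ℝ) / (F.card + 1)) + ‖∑ i ∈ F, ⟪A (b i), Z (b i)⟫_ℂ‖ := by
    calc ∑ i ∈ F, ‖(sqA A) (b i)‖ ^ 2
        = (∑ i ∈ F, RCLike.re ⟪(absOp A - ContinuousLinearMap.adjoint Z * A) (b i), (b i)⟫_ℂ)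
          + ∑ i ∈ F, RCLike.re ⟪A (b i), Z (b i)⟫_ℂ := by
          rw [← Finset.sum_add_distrib]
          exact Finset.sum_congr rfl fun i _ => hterm i
      _ ≤ (F.card : ℝ) * ((ε : ℝ) / (F.card + 1)) + ‖∑ i ∈ F, ⟪A (b i), Z (b i)⟫_ℂ‖ := by
          refine add_le_add ?_ ?_
          · have := Finset.sum_le_card_nsmul F _ _ herr
            rwa [nsmul_eq_mul] at this
          · rw [← map_sum]
            exact RCLike.re_le_norm _
  calc ENNReal.ofReal (∑ i ∈ F, ‖(sqA A) (b i)‖ ^ 2)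
      ≤ ENNReal.ofReal ((F.card : ℝ) * ((ε : ℝ) / (F.card + 1))
          + ‖∑ i ∈ F, ⟪A (b i), Z (b i)⟫_ℂ‖) := ENNReal.ofReal_le_ofReal hsum
    _ ≤ ENNReal.ofReal ((F.card : ℝ) * ((ε : ℝ) / (F.card + 1)))
          + ENNReal.ofReal ‖∑ i ∈ F, ⟪A (b i), Z (b i)⟫_ℂ‖ := ENNReal.ofReal_add_le
    _ ≤ (ε : ℝ≥0∞) + eT b A := by
        refine add_le_add ?_ ?_
        · rw [← ENNReal.ofReal_coe_nnreal]
          apply ENNReal.ofReal_le_ofReal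
          have hc0 : (0:ℝ) ≤ (F.card : ℝ) := Nat.cast_nonneg _
          rw [mul_div_assoc', div_le_iff₀ (by positivity)]
          nlinarith [NNReal.coe_nonneg ε]
        · have heq : ∑ i ∈ F, ⟪A (b i), Z (b i)⟫_ℂ
              = ∑ i ∈ F, ⟪A ((1 : E →L[ℂ] E) (b i)), Z (b i)⟫_ℂ := by
            simp [ContinuousLinearMap.one_apply]
          rw [heq]
          exact le_eT b A F ⟨1, norm_one_le'⟩ ⟨Z, hZ1⟩
    _ = eT b A + (ε : ℝ≥0∞) := add_comm _ _

theorem eTr_eq_eT (A : E →L[ℂ] E) : eTr b A = eT b A :=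
  le_antisymm (eTr_le_eT b A) (eT_le_eTr b A)

end eTlemmas

section transfer

variable (b : HilbertBasis ι ℂ E)

lemma eT_zero : eT b (0 : E →L[ℂ] E) = 0 := by
  refine le_antisymm (eT_le b fun F V W => ?_) (zero_le)
  simp

lemma eTr_zero : eTr b (0 : E →L[ℂ] E) = 0 := by
  rw [eTr_eq_eT]
  exact eT_zero b

lemma eTr_add (A₁ A₂ : E →L[ℂ] E) : eTr b (A₁ + A₂) ≤ eTr b A₁ + eTr b A₂ := by
  rw [eTr_eq_eT, eTr_eq_eT, eTr_eq_eT]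
  refine eT_le b fun F V W => ?_
  have hsplit : ∀ i, ⟪(A₁ + A₂) (V.1 (b i)), W.1 (b i)⟫_ℂ
      = ⟪A₁ (V.1 (b i)), W.1 (b i)⟫_ℂ + ⟪A₂ (V.1 (b i)), W.1 (b i)⟫_ℂ := by
    intro i
    rw [← inner_add_left]
    rw [ContinuousLinearMap.add_apply]
  calc ENNReal.ofReal ‖∑ i ∈ F, ⟪(A₁ + A₂) (V.1 (b i)), W.1 (b i)⟫_ℂ‖
      = ENNReal.ofReal ‖(∑ i ∈ F, ⟪A₁ (V.1 (b i)), W.1 (b i)⟫_ℂ)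
          + ∑ i ∈ F, ⟪A₂ (V.1 (b i)), W.1 (b i)⟫_ℂ‖ := by
        rw [← Finset.sum_add_distrib]
        congr 2
        exact Finset.sum_congr rfl fun i _ => hsplit i
    _ ≤ ENNReal.ofReal (‖∑ i ∈ F, ⟪A₁ (V.1 (b i)), W.1 (b i)⟫_ℂ‖
          + ‖∑ i ∈ F, ⟪A₂ (V.1 (b i)), W.1 (b i)⟫_ℂ‖) :=
        ENNReal.ofReal_le_ofReal (norm_add_le _ _)
    _ ≤ ENNReal.ofReal ‖∑ i ∈ F, ⟪A₁ (V.1 (b i)), W.1 (b i)⟫_ℂ‖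
          + ENNReal.ofReal ‖∑ i ∈ F, ⟪A₂ (V.1 (b i)), W.1 (b i)⟫_ℂ‖ := ENNReal.ofReal_add_le
    _ ≤ eT b A₁ + eT b A₂ := add_le_add (le_eT b A₁ F V W) (le_eT b A₂ F V W)

lemma eTr_finsum {κ : Type*} (G : Finset κ) (A : κ → (E →L[ℂ] E)) :
    eTr b (∑ k ∈ G, A k) ≤ ∑ k ∈ G, eTr b (A k) := by
  classical
  induction G using Finset.induction_on with
  | empty => simp [eTr_zero b]
  | insert k G' hk ih =>
    rw [Finset.sum_insert hk, Finset.sum_insert hk]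
    exact le_trans (eTr_add b _ _) (add_le_add le_rfl ih)

lemma eTr_smul (c : ℂ) (A : E →L[ℂ] E) :
    eTr b (c • A) ≤ ENNReal.ofReal ‖c‖ * eTr b A := by
  rw [eTr_eq_eT, eTr_eq_eT]
  refine eT_le b fun F V W => ?_
  have hsplit : ∀ i, ⟪(c • A) (V.1 (b i)), W.1 (b i)⟫_ℂ
      = (starRingEnd ℂ) c * ⟪A (V.1 (b i)), W.1 (b i)⟫_ℂ := by
    intro i
    rw [ContinuousLinearMap.smul_apply, inner_smul_left]
  calc ENNReal.ofReal ‖∑ i ∈ F, ⟪(c • A) (V.1 (b i)), W.1 (b i)⟫_ℂ‖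
      = ENNReal.ofReal (‖c‖ * ‖∑ i ∈ F, ⟪A (V.1 (b i)), W.1 (b i)⟫_ℂ‖) := by
        rw [Finset.sum_congr rfl fun i _ => hsplit i, ← Finset.mul_sum, norm_mul,
          RCLike.norm_conj]
    _ = ENNReal.ofReal ‖c‖ * ENNReal.ofReal ‖∑ i ∈ F, ⟪A (V.1 (b i)), W.1 (b i)⟫_ℂ‖ :=
        ENNReal.ofReal_mul (norm_nonneg c)
    _ ≤ ENNReal.ofReal ‖c‖ * eT b A := mul_le_mul' le_rfl (le_eT b A F V W)

lemma eTr_mul_left (X A : E →L[ℂ] E) :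
    eTr b (X * A) ≤ ENNReal.ofReal ‖X‖ * eTr b A := by
  by_cases hX : X = 0
  · simp [hX, eTr_zero b]
  have hXn : ‖X‖ ≠ 0 := norm_ne_zero_iff.2 hX
  rw [eTr_eq_eT, eTr_eq_eT]
  refine eT_le b fun F V W => ?_
  set W' : E →L[ℂ] E := ((‖X‖ : ℂ))⁻¹ • (ContinuousLinearMap.adjoint X * W.1) with hW'
  have hW'norm : ‖W'‖ ≤ 1 := by
    rw [hW', norm_smul]
    have h1 : ‖ContinuousLinearMap.adjoint X * W.1‖ ≤ ‖X‖ := by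
      refine le_trans (norm_mul_le _ _) ?_
      rw [← ContinuousLinearMap.star_eq_adjoint, norm_star]
      nlinarith [norm_nonneg X, norm_nonneg W.1, W.2]
    have h2 : ‖((‖X‖ : ℂ))⁻¹‖ = ‖X‖⁻¹ := by
      rw [norm_inv, Complex.norm_real, norm_norm]
    rw [h2]
    calc ‖X‖⁻¹ * ‖ContinuousLinearMap.adjoint X * W.1‖ ≤ ‖X‖⁻¹ * ‖X‖ :=
          mul_le_mul_of_nonneg_left h1 (by positivity)
      _ = 1 := inv_mul_cancel₀ hXn
  have hsplit : ∀ i, ⟪(X * A) (V.1 (b i)), W.1 (b i)⟫_ℂ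
      = (‖X‖ : ℂ) * ⟪A (V.1 (b i)), W' (b i)⟫_ℂ := by
    intro i
    have h1 : (X * A) (V.1 (b i)) = X (A (V.1 (b i))) := rfl
    rw [h1, ← adjoint_inner_right]
    have h2 : ContinuousLinearMap.adjoint X (W.1 (b i))
        = (ContinuousLinearMap.adjoint X * W.1) (b i) := rfl
    rw [h2, show (ContinuousLinearMap.adjoint X * W.1) = (‖X‖ : ℂ) • W' by
      rw [hW', smul_smul, mul_inv_cancel₀ (by exact_mod_cast hXn), one_smul]]
    rw [ContinuousLinearMap.smul_apply, inner_smul_right]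
  calc ENNReal.ofReal ‖∑ i ∈ F, ⟪(X * A) (V.1 (b i)), W.1 (b i)⟫_ℂ‖
      = ENNReal.ofReal (‖X‖ * ‖∑ i ∈ F, ⟪A (V.1 (b i)), W' (b i)⟫_ℂ‖) := by
        rw [Finset.sum_congr rfl fun i _ => hsplit i, ← Finset.mul_sum, norm_mul,
          Complex.norm_real, norm_norm]
    _ = ENNReal.ofReal ‖X‖ * ENNReal.ofReal ‖∑ i ∈ F, ⟪A (V.1 (b i)), W' (b i)⟫_ℂ‖ :=
        ENNReal.ofReal_mul (norm_nonneg X)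
    _ ≤ ENNReal.ofReal ‖X‖ * eT b A := mul_le_mul' le_rfl (le_eT b A F V ⟨W', hW'norm⟩)

lemma eTr_mul_right (A X : E →L[ℂ] E) :
    eTr b (A * X) ≤ ENNReal.ofReal ‖X‖ * eTr b A := by
  by_cases hX : X = 0
  · simp [hX, eTr_zero b]
  have hXn : ‖X‖ ≠ 0 := norm_ne_zero_iff.2 hX
  rw [eTr_eq_eT, eTr_eq_eT]
  refine eT_le b fun F V W => ?_
  set V' : E →L[ℂ] E := ((‖X‖ : ℂ))⁻¹ • (X * V.1) with hV'
  have hV'norm : ‖V'‖ ≤ 1 := by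
    rw [hV', norm_smul]
    have h1 : ‖X * V.1‖ ≤ ‖X‖ := by
      refine le_trans (norm_mul_le _ _) ?_
      nlinarith [norm_nonneg X, norm_nonneg V.1, V.2]
    have h2 : ‖((‖X‖ : ℂ))⁻¹‖ = ‖X‖⁻¹ := by
      rw [norm_inv, Complex.norm_real, norm_norm]
    rw [h2]
    calc ‖X‖⁻¹ * ‖X * V.1‖ ≤ ‖X‖⁻¹ * ‖X‖ :=
          mul_le_mul_of_nonneg_left h1 (by positivity)
      _ = 1 := inv_mul_cancel₀ hXn
  have hsplit : ∀ i, ⟪(A * X) (V.1 (b i)), W.1 (b i)⟫_ℂ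
      = (‖X‖ : ℂ) * ⟪A (V' (b i)), W.1 (b i)⟫_ℂ := by
    intro i
    have h1 : (A * X) (V.1 (b i)) = A ((X * V.1) (b i)) := rfl
    rw [h1, show (X * V.1) = (‖X‖ : ℂ) • V' by
      rw [hV', smul_smul, mul_inv_cancel₀ (by exact_mod_cast hXn), one_smul]]
    rw [ContinuousLinearMap.smul_apply, map_smul, inner_smul_left,
      Complex.conj_ofReal]
  calc ENNReal.ofReal ‖∑ i ∈ F, ⟪(A * X) (V.1 (b i)), W.1 (b i)⟫_ℂ‖
      = ENNReal.ofReal (‖X‖ * ‖∑ i ∈ F, ⟪A (V' (b i)), W.1 (b i)⟫_ℂ‖) := by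
        rw [Finset.sum_congr rfl fun i _ => hsplit i, ← Finset.mul_sum, norm_mul,
          Complex.norm_real, norm_norm]
    _ = ENNReal.ofReal ‖X‖ * ENNReal.ofReal ‖∑ i ∈ F, ⟪A (V' (b i)), W.1 (b i)⟫_ℂ‖ :=
        ENNReal.ofReal_mul (norm_nonneg X)
    _ ≤ ENNReal.ofReal ‖X‖ * eT b A := mul_le_mul' le_rfl (le_eT b A F ⟨V', hV'norm⟩ W)

lemma eTr_lim {A : ℕ → (E →L[ℂ] E)} {A' : E →L[ℂ] E}
    (h : Filter.Tendsto A Filter.atTop (nhds A')) {m : ℝ≥0∞}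
    (hb : ∀ n, eTr b (A n) ≤ m) : eTr b A' ≤ m := by
  rw [eTr_eq_eT]
  refine eT_le b fun F V W => ?_
  have hcont : Filter.Tendsto (fun n => ∑ i ∈ F, ⟪A n (V.1 (b i)), W.1 (b i)⟫_ℂ)
      Filter.atTop (nhds (∑ i ∈ F, ⟪A' (V.1 (b i)), W.1 (b i)⟫_ℂ)) := by
    refine tendsto_finset_sum _ fun i _ => ?_
    have h1 : Filter.Tendsto (fun n => A n (V.1 (b i))) Filter.atTop (nhds (A' (V.1 (b i)))) :=
      ((ContinuousLinearMap.apply ℂ E (V.1 (b i))).continuous.tendsto A').comp h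
    exact h1.inner tendsto_const_nhds
  have htend : Filter.Tendsto
      (fun n => ENNReal.ofReal ‖∑ i ∈ F, ⟪A n (V.1 (b i)), W.1 (b i)⟫_ℂ‖)
      Filter.atTop (nhds (ENNReal.ofReal ‖∑ i ∈ F, ⟪A' (V.1 (b i)), W.1 (b i)⟫_ℂ‖)) :=
    (ENNReal.continuous_ofReal.tendsto _).comp hcont.norm
  refine le_of_tendsto htend (Filter.Eventually.of_forall fun n => ?_)
  exact le_trans (le_eT b (A n) F V W) (by rw [← eTr_eq_eT]; exact hb n)

lemma traceNorm_term_eq (A : E →L[ℂ] E) (i : ι) :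
    RCLike.re ⟪absOp A (b i), b i⟫_ℂ = ‖sqA A (b i)‖ ^ 2 := by
  rw [inner_absOp A, inner_self_eq_norm_sq (𝕜 := ℂ)]

lemma isTraceClass_iff (A : E →L[ℂ] E) : IsTraceClass b A ↔ eTr b A ≠ ⊤ := by
  unfold IsTraceClass
  rw [show (fun i => RCLike.re ⟪absOp A (b i), b i⟫_ℂ) = fun i => ‖sqA A (b i)‖ ^ 2
    from funext (traceNorm_term_eq b A)]
  constructor
  · intro h
    rw [eTr, esq, ← ENNReal.ofReal_tsum_of_nonneg (fun i => sq_nonneg _) h]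
    exact ENNReal.ofReal_ne_top
  · intro h
    rw [eTr, esq] at h
    exact (ENNReal.summable_toReal h).congr fun i => ENNReal.toReal_ofReal (sq_nonneg _)

lemma traceNorm_eq (A : E →L[ℂ] E) (h : IsTraceClass b A) :
    traceNorm b A = (eTr b A).toReal := by
  have hsum : Summable fun i => ‖sqA A (b i)‖ ^ 2 := by
    have := h
    unfold IsTraceClass at this
    exact this.congr fun i => traceNorm_term_eq b A i
  have h1 : traceNorm b A = ∑' i, ‖sqA A (b i)‖ ^ 2 :=
    tsum_congr fun i => traceNorm_term_eq b A i
  rw [h1, eTr, esq, ← ENNReal.ofReal_tsum_of_nonneg (fun i => sq_nonneg _) hsum,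
    ENNReal.toReal_ofReal (tsum_nonneg fun i => sq_nonneg _)]

end transfer

section mainsteps

variable (b : HilbertBasis ι ℂ E)

lemma norm_pow_le'' (y : E →L[ℂ] E) (j : ℕ) : ‖y ^ j‖ ≤ ‖y‖ ^ j := by
  induction j with
  | zero => simpa using norm_one_le' (E := E)
  | succ n ih =>
    rw [pow_succ, pow_succ]
    exact le_trans (norm_mul_le _ _)
      (mul_le_mul ih le_rfl (norm_nonneg _) (pow_nonneg (norm_nonneg _) _))

lemma comm_pow (P y : E →L[ℂ] E) (m : ℕ) :
    P * y ^ m - y ^ m * P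
      = ∑ j ∈ Finset.range m, y ^ j * (P * y - y * P) * y ^ (m - 1 - j) := by
  induction m with
  | zero => simp
  | succ m ih =>
    have key : P * y ^ (m + 1) - y ^ (m + 1) * P
        = y * (P * y ^ m - y ^ m * P) + (P * y - y * P) * y ^ m := by
      rw [pow_succ]
      rw [show y ^ m * y = y * y ^ m from (pow_succ y m).symm.trans (pow_succ' y m)]
      noncomm_ring
    have hstep : ∀ j, y ^ (j + 1) * (P * y - y * P) * y ^ (m + 1 - 1 - (j + 1))
        = y * (y ^ j * (P * y - y * P) * y ^ (m - 1 - j)) := by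
      intro j
      have hidx : m + 1 - 1 - (j + 1) = m - 1 - j := by omega
      rw [hidx, pow_succ']
      noncomm_ring
    rw [key, ih, Finset.sum_range_succ'
      (fun j => y ^ j * (P * y - y * P) * y ^ (m + 1 - 1 - j)) m]
    rw [Finset.mul_sum]
    rw [Finset.sum_congr rfl fun j _ => (hstep j).symm]
    simp

lemma eTr_comm_pow (P y : E →L[ℂ] E) (m : ℕ) :
    eTr b (P * y ^ m - y ^ m * P)
      ≤ (m : ℝ≥0∞) * ENNReal.ofReal (‖y‖ ^ (m - 1)) * eTr b (P * y - y * P) := by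
  rw [comm_pow]
  refine le_trans (eTr_finsum b _ _) ?_
  have hterm : ∀ j ∈ Finset.range m,
      eTr b (y ^ j * (P * y - y * P) * y ^ (m - 1 - j))
        ≤ ENNReal.ofReal (‖y‖ ^ (m - 1)) * eTr b (P * y - y * P) := by
    intro j hj
    have hj' : j < m := Finset.mem_range.1 hj
    calc eTr b (y ^ j * (P * y - y * P) * y ^ (m - 1 - j))
        ≤ ENNReal.ofReal ‖y ^ (m - 1 - j)‖ * eTr b (y ^ j * (P * y - y * P)) :=
          eTr_mul_right b _ _
      _ ≤ ENNReal.ofReal ‖y ^ (m - 1 - j)‖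
            * (ENNReal.ofReal ‖y ^ j‖ * eTr b (P * y - y * P)) :=
          mul_le_mul' le_rfl (eTr_mul_left b _ _)
      _ ≤ ENNReal.ofReal (‖y‖ ^ (m - 1 - j))
            * (ENNReal.ofReal (‖y‖ ^ j) * eTr b (P * y - y * P)) := by
          refine mul_le_mul' (ENNReal.ofReal_le_ofReal (norm_pow_le'' y _))
            (mul_le_mul' (ENNReal.ofReal_le_ofReal (norm_pow_le'' y _)) le_rfl)
      _ = ENNReal.ofReal (‖y‖ ^ (m - 1)) * eTr b (P * y - y * P) := by
          rw [← mul_assoc, ← ENNReal.ofReal_mul (by positivity), ← pow_add]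
          congr 3
          omega
  refine le_trans (Finset.sum_le_sum hterm) ?_
  rw [Finset.sum_const, Finset.card_range, nsmul_eq_mul, mul_assoc]

/-- `e^{i s x}` as a function of the real parameter `s`. -/
noncomputable def uexp (x : E →L[ℂ] E) (s : ℝ) : E →L[ℂ] E :=
  NormedSpace.exp ((s : ℂ) • Complex.I • x)

lemma uexp_star (x : E →L[ℂ] E) (hx : IsSelfAdjoint x) (s : ℝ) :
    star (uexp x s) = uexp x (-s) := by
  unfold uexp
  rw [NormedSpace.star_exp]
  congr 1
  rw [smul_smul, smul_smul, star_smul, hx.star_eq]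
  congr 1
  rw [Complex.star_def, map_mul, Complex.conj_ofReal, Complex.conj_I]
  push_cast
  ring

lemma uexp_mul (x : E →L[ℂ] E) (s₁ s₂ : ℝ) :
    uexp x s₁ * uexp x s₂ = uexp x (s₁ + s₂) := by
  unfold uexp
  let +nondep : NormedAlgebra ℚ (E →L[ℂ] E) := .restrictScalars ℚ ℂ _
  rw [← NormedSpace.exp_add_of_commute]
  · congr 1
    rw [smul_smul, smul_smul, smul_smul, ← add_smul]
    congr 1
    push_cast
    ring
  · exact ((Commute.refl (Complex.I • x)).smul_left _).smul_right _

lemma uexp_unitary (x : E →L[ℂ] E) (hx : IsSelfAdjoint x) (s : ℝ) :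
    star (uexp x s) * uexp x s = 1 := by
  rw [uexp_star x hx, uexp_mul, neg_add_cancel]
  unfold uexp
  rw [show ((0 : ℝ) : ℂ) • Complex.I • x = 0 by simp]
  exact NormedSpace.exp_zero

lemma uexp_norm_le (x : E →L[ℂ] E) (hx : IsSelfAdjoint x) (s : ℝ) : ‖uexp x s‖ ≤ 1 := by
  refine ContinuousLinearMap.opNorm_le_bound _ zero_le_one fun v => ?_
  have h2 := adjoint_inner_left (uexp x s) v (uexp x s v)
  rw [← ContinuousLinearMap.star_eq_adjoint] at h2
  have h3 : star (uexp x s) ((uexp x s) v) = v := by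
    rw [← ContinuousLinearMap.mul_apply, uexp_unitary x hx, ContinuousLinearMap.one_apply]
  rw [h3] at h2
  have h4 : ‖uexp x s v‖ ^ 2 = ‖v‖ ^ 2 := by
    rw [← inner_self_eq_norm_sq (𝕜 := ℂ), ← inner_self_eq_norm_sq (𝕜 := ℂ), ← h2]
  rw [one_mul]
  nlinarith [norm_nonneg (uexp x s v), norm_nonneg v]

lemma eTr_comm_uexp_le (P x : E →L[ℂ] E) {M : ℝ} (hM0 : 0 ≤ M)
    (hCle : eTr b (P * x - x * P) ≤ ENNReal.ofReal M) (s : ℝ) :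
    eTr b (P * uexp x s - uexp x s * P)
      ≤ ENNReal.ofReal (|s| * Real.exp (|s| * ‖x‖) * M) := by
  set z : E →L[ℂ] E := (s : ℂ) • Complex.I • x with hz
  have hznorm : ‖z‖ = |s| * ‖x‖ := by
    rw [hz, norm_smul, norm_smul, Complex.norm_I, one_mul, Complex.norm_real,
      Real.norm_eq_abs]
  have hCz : eTr b (P * z - z * P) ≤ ENNReal.ofReal (|s| * M) := by
    have hz2 : z = ((s : ℂ) * Complex.I) • x := by rw [hz, smul_smul]
    have hPz : P * z - z * P = ((s : ℂ) * Complex.I) • (P * x - x * P) := by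
      rw [hz2, mul_smul_comm, smul_mul_assoc, ← smul_sub]
    rw [hPz]
    refine le_trans (eTr_smul b _ _) ?_
    rw [norm_mul, Complex.norm_I, mul_one, Complex.norm_real, Real.norm_eq_abs]
    calc ENNReal.ofReal |s| * eTr b (P * x - x * P)
        ≤ ENNReal.ofReal |s| * ENNReal.ofReal M := mul_le_mul' le_rfl hCle
      _ = ENNReal.ofReal (|s| * M) := (ENNReal.ofReal_mul (abs_nonneg s)).symm
  have hexp := NormedSpace.exp_series_hasSum_exp' (𝕂 := ℂ) z
  have htends := hexp.tendsto_sum_nat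
  have htends2 : Filter.Tendsto
      (fun n => P * (∑ m ∈ Finset.range n, ((m.factorial : ℂ))⁻¹ • z ^ m)
        - (∑ m ∈ Finset.range n, ((m.factorial : ℂ))⁻¹ • z ^ m) * P)
      Filter.atTop (nhds (P * uexp x s - uexp x s * P)) := by
    have hu : uexp x s = NormedSpace.exp z := by rw [uexp, hz]
    rw [hu]
    exact (tendsto_const_nhds.mul htends).sub (htends.mul tendsto_const_nhds)
  refine eTr_lim b htends2 fun n => ?_
  have hcomm : P * (∑ m ∈ Finset.range n, ((m.factorial : ℂ))⁻¹ • z ^ m)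
      - (∑ m ∈ Finset.range n, ((m.factorial : ℂ))⁻¹ • z ^ m) * P
      = ∑ m ∈ Finset.range n, ((m.factorial : ℂ))⁻¹ • (P * z ^ m - z ^ m * P) := by
    rw [Finset.mul_sum, Finset.sum_mul, ← Finset.sum_sub_distrib]
    refine Finset.sum_congr rfl fun m _ => ?_
    rw [mul_smul_comm, smul_mul_assoc, smul_sub]
  rw [hcomm]
  refine le_trans (eTr_finsum b _ _) ?_
  have hterm : ∀ m ∈ Finset.range n,
      eTr b (((m.factorial : ℂ))⁻¹ • (P * z ^ m - z ^ m * P))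
        ≤ ENNReal.ofReal ((m : ℝ) / m.factorial * ‖z‖ ^ (m - 1) * (|s| * M)) := by
    intro m _
    refine le_trans (eTr_smul b _ _) ?_
    refine le_trans (mul_le_mul' le_rfl (eTr_comm_pow b P z m)) ?_
    have hnorm : ‖((m.factorial : ℂ))⁻¹‖ = ((m.factorial : ℝ))⁻¹ := by
      rw [norm_inv, RCLike.norm_natCast]
    calc ENNReal.ofReal ‖((m.factorial : ℂ))⁻¹‖
          * ((m : ℝ≥0∞) * ENNReal.ofReal (‖z‖ ^ (m - 1)) * eTr b (P * z - z * P))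
        ≤ ENNReal.ofReal (((m.factorial : ℝ))⁻¹)
          * (ENNReal.ofReal (m : ℝ) * ENNReal.ofReal (‖z‖ ^ (m - 1))
            * ENNReal.ofReal (|s| * M)) := by
          rw [hnorm, ENNReal.ofReal_natCast]
          exact mul_le_mul' le_rfl (mul_le_mul' le_rfl hCz)
      _ = ENNReal.ofReal ((m : ℝ) / m.factorial * ‖z‖ ^ (m - 1) * (|s| * M)) := by
          rw [← ENNReal.ofReal_mul (by positivity), ← ENNReal.ofReal_mul (by positivity),
            ← ENNReal.ofReal_mul (by positivity)]
          congr 1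
          field_simp
  refine le_trans (Finset.sum_le_sum hterm) ?_
  rw [← ENNReal.ofReal_sum_of_nonneg (fun m _ => by positivity)]
  apply ENNReal.ofReal_le_ofReal
  have hsum : ∑ m ∈ Finset.range n, (m : ℝ) / m.factorial * ‖z‖ ^ (m - 1)
      ≤ Real.exp ‖z‖ := by
    cases n with
    | zero => simpa using (Real.exp_pos ‖z‖).le
    | succ k =>
      rw [Finset.sum_range_succ' (fun m => (m : ℝ) / m.factorial * ‖z‖ ^ (m - 1)) k]
      have hshift : ∀ j : ℕ, ((j + 1 : ℕ) : ℝ) / (j + 1).factorial * ‖z‖ ^ (j + 1 - 1)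
          = ‖z‖ ^ j / j.factorial := by
        intro j
        rw [Nat.factorial_succ, Nat.add_sub_cancel]
        push_cast
        have hj : ((j.factorial : ℝ)) ≠ 0 := Nat.cast_ne_zero.2 j.factorial_ne_zero
        field_simp
      rw [Finset.sum_congr rfl fun j _ => hshift j]
      simp only [Nat.cast_zero, Nat.factorial_zero, Nat.cast_one, zero_div, zero_mul, add_zero]
      exact Real.sum_le_exp_of_nonneg (norm_nonneg z) k
  calc ∑ m ∈ Finset.range n, (m : ℝ) / m.factorial * ‖z‖ ^ (m - 1) * (|s| * M)
      = (∑ m ∈ Finset.range n, (m : ℝ) / m.factorial * ‖z‖ ^ (m - 1)) * (|s| * M) :=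
        (Finset.sum_mul _ _ _).symm
    _ ≤ Real.exp ‖z‖ * (|s| * M) := mul_le_mul_of_nonneg_right hsum (by positivity)
    _ = |s| * Real.exp (|s| * ‖x‖) * M := by rw [hznorm]; ring

end mainsteps

end CommTrace

open CommTrace in
/-- Let `P = 1_{(-∞,0]}(H)` be the spectral projection of a lower semibounded
self-adjoint operator (realised through a multiplicative, adjoint-preserving
Borel functional calculus `Φ`), and let `x` be a bounded self-adjoint operator with
`[P, x]` trace class, `‖[P, x]‖₁ ≤ M`.  Then for every `t ∈ ℝ` the commutator
`[P, e^{itx}]` is trace class and `‖[P, e^{itx}]‖₁ ≤ |t| M`. -/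
theorem traceNorm_commutator_exp_le {ι E : Type*} [NormedAddCommGroup E]
    [InnerProductSpace ℂ E] [CompleteSpace E]
    (b : HilbertBasis ι ℂ E)
    (Φ : (ℝ → ℂ) → (E →L[ℂ] E))
    (hΦmul : ∀ f g : ℝ → ℂ, Φ (f * g) = Φ f * Φ g)
    (hΦstar : ∀ f : ℝ → ℂ, Φ (fun t => starRingEnd ℂ (f t)) = ContinuousLinearMap.adjoint (Φ f))
    (c : ℝ) (hsemibdd : ∀ s : ℝ, s < c → Φ (Set.indicator (Set.Iic s) (fun _ => (1 : ℂ))) = 0)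
    (P : E →L[ℂ] E)
    (hP : P = Φ (Set.indicator (Set.Iic (0 : ℝ)) (fun _ => (1 : ℂ))))
    (x : E →L[ℂ] E) (hx : IsSelfAdjoint x)
    (M : ℝ)
    (htc : IsTraceClass b (P * x - x * P))
    (hM : traceNorm b (P * x - x * P) ≤ M)
    (t : ℝ) :
    IsTraceClass b (P * NormedSpace.exp ((t : ℂ) • Complex.I • x)
        - NormedSpace.exp ((t : ℂ) • Complex.I • x) * P) ∧
      traceNorm b (P * NormedSpace.exp ((t : ℂ) • Complex.I • x)
        - NormedSpace.exp ((t : ℂ) • Complex.I • x) * P) ≤ |t| * M := by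
  classical
  have hPstar : ContinuousLinearMap.adjoint P = P := by
    rw [hP, ← hΦstar]
    congr 1
    funext s
    by_cases hs : s ∈ Set.Iic (0:ℝ)
    · simp [Set.indicator_of_mem hs]
    · simp [Set.indicator_of_notMem hs]
  have hP2 : P * P = P := by
    rw [hP, ← hΦmul]
    congr 1
    funext s
    by_cases hs : s ∈ Set.Iic (0:ℝ)
    · simp [Set.indicator_of_mem hs]
    · simp [Set.indicator_of_notMem hs]
  have hM0 : 0 ≤ M := by
    refine le_trans ?_ hM
    unfold traceNorm
    exact tsum_nonneg fun i => by
      rw [CommTrace.traceNorm_term_eq b]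
      positivity
  have hCfin : eTr b (P * x - x * P) ≠ ⊤ := (isTraceClass_iff b _).1 htc
  have hCle : eTr b (P * x - x * P) ≤ ENNReal.ofReal M := by
    rw [show eTr b (P * x - x * P) = ENNReal.ofReal (traceNorm b (P * x - x * P)) from by
      rw [traceNorm_eq b _ htc, ENNReal.ofReal_toReal hCfin]]
    exact ENNReal.ofReal_le_ofReal hM
  have hgoal_eq : NormedSpace.exp ((t : ℂ) • Complex.I • x) = uexp x t := rfl
  have hsmall := fun s => eTr_comm_uexp_le b P x hM0 hCle s
  have hbound : ∀ n : ℕ, 1 ≤ n → eTr b (P * uexp x t - uexp x t * P)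
      ≤ ENNReal.ofReal (|t| * Real.exp (|t| * ‖x‖ / n) * M) := by
    intro n hn
    have hn0 : ((n:ℝ)) ≠ 0 := Nat.cast_ne_zero.2 (by omega)
    have hpow : uexp x t = (uexp x (t / n)) ^ n := by
      unfold uexp
      let +nondep : NormedAlgebra ℚ (E →L[ℂ] E) := .restrictScalars ℚ ℂ _
      rw [← NormedSpace.exp_nsmul, ← Nat.cast_smul_eq_nsmul ℂ]
      congr 1
      have hsc : ((n:ℂ)) * (((t / n : ℝ)):ℂ) = (t:ℂ) := by
        have hnC : ((n:ℕ):ℂ) ≠ 0 := Nat.cast_ne_zero.2 (by omega)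
        push_cast
        rw [mul_comm, div_mul_cancel₀ _ hnC]
      conv_rhs => rw [smul_smul, hsc]
    rw [hpow]
    refine le_trans (eTr_comm_pow b P _ n) ?_
    have h1 : ENNReal.ofReal (‖uexp x (t/n)‖ ^ (n-1)) ≤ 1 :=
      ENNReal.ofReal_le_one.2 (pow_le_one₀ (norm_nonneg _) (uexp_norm_le x hx _))
    calc (n : ℝ≥0∞) * ENNReal.ofReal (‖uexp x (t/n)‖ ^ (n-1))
          * eTr b (P * uexp x (t/n) - uexp x (t/n) * P)
        ≤ (n : ℝ≥0∞) * 1 * ENNReal.ofReal (|t/n| * Real.exp (|t/n| * ‖x‖) * M) :=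
          mul_le_mul' (mul_le_mul' le_rfl h1) (hsmall (t/n))
      _ = ENNReal.ofReal ((n:ℝ) * (|t/n| * Real.exp (|t/n| * ‖x‖) * M)) := by
          rw [mul_one, ← ENNReal.ofReal_natCast n, ← ENNReal.ofReal_mul (Nat.cast_nonneg n)]
      _ = ENNReal.ofReal (|t| * Real.exp (|t| * ‖x‖ / n) * M) := by
          congr 1
          rw [abs_div, Nat.abs_cast]
          field_simp
          try ring
  have hlim0 : Filter.Tendsto (fun n : ℕ => |t| * ‖x‖ / n) Filter.atTop (nhds 0) :=
    tendsto_const_div_atTop_nhds_zero_nat _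
  have hlim1 : Filter.Tendsto (fun n : ℕ => |t| * Real.exp (|t| * ‖x‖ / n) * M)
      Filter.atTop (nhds (|t| * Real.exp 0 * M)) :=
    (((Real.continuous_exp.tendsto 0).comp hlim0).const_mul |t|).mul_const M
  have hlim2 : Filter.Tendsto (fun n : ℕ => ENNReal.ofReal (|t| * Real.exp (|t| * ‖x‖ / n) * M))
      Filter.atTop (nhds (ENNReal.ofReal (|t| * Real.exp 0 * M))) :=
    (ENNReal.continuous_ofReal.tendsto _).comp hlim1
  have hfinal : eTr b (P * uexp x t - uexp x t * P) ≤ ENNReal.ofReal (|t| * M) := by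
    have h := ge_of_tendsto hlim2 (Filter.eventually_atTop.2 ⟨1, fun n hn => hbound n hn⟩)
    simpa [Real.exp_zero] using h
  have htc2 : IsTraceClass b (P * uexp x t - uexp x t * P) :=
    (isTraceClass_iff b _).2 (ne_top_of_le_ne_top ENNReal.ofReal_ne_top hfinal)
  constructor
  · rw [hgoal_eq]
    exact htc2
  · rw [hgoal_eq, traceNorm_eq b _ htc2]
    calc (eTr b (P * uexp x t - uexp x t * P)).toReal
        ≤ (ENNReal.ofReal (|t| * M)).toReal :=
          ENNReal.toReal_mono ENNReal.ofReal_ne_top hfinal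
      _ = |t| * M := ENNReal.toReal_ofReal (by positivity)
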